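/- arXiv:1210.4784 — 2 statements merged into one kernel-verified Lean document; each statement's English description precedes it below -/
import Mathlib

section
/- Newton's method converges quadratically: if f : ℝ^N → ℝ^N is C², f(u*) = 0, and Df(u*) is invertible, then there exist δ > 0 and C > 0 such that for every u_0 with ‖u_0 - u*‖ < δ, the Newton iterates u_{k+1} = u_k - Df(u_k)⁻¹ f(u_k) are well defined and satisfy ‖u_{k+1} - u*‖ ≤ C‖u_k - u*‖². -/
/-!
Write `A = Df(v)`. The Newton error is the image under `A⁻¹` of the first-order Taylor
remainder: `v - A⁻¹ f(v) - u* = A⁻¹ (f(u*) - f(v) - A (u* - v))`. Since `Df` is Lipschitz near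
`u*`, the remainder is `O(‖v - u*‖²)`; since invertibility is an open condition and inversion is
continuous, `‖Df(v)⁻¹‖` stays bounded near `u*`. If `C` is the constant of the resulting quadratic
estimate, the Newton step maps a ball of radius at most `1 / C` into itself, so the estimate
applies to every iterate.
-/

open Filter Metric Topology
open scoped NNReal

section

variable {𝕜 E F : Type*} [NontriviallyNormedField 𝕜] [NormedAddCommGroup E] [NormedSpace 𝕜 E]
  [NormedAddCommGroup F] [NormedSpace 𝕜 F]

theorem ContinuousLinearEquiv.norm_sub_symm_apply_sub_le (A : E ≃L[𝕜] F) {f : E → F} {u : E}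
    (hu : f u = 0) (v : E) :
    ‖v - A.symm (f v) - u‖ ≤ ‖(A.symm : F →L[𝕜] E)‖ * ‖f u - f v - A (u - v)‖ := by
  have : v - A.symm (f v) - u = A.symm (f u - f v - A (u - v)) := by
    simp only [hu, map_sub, map_zero, symm_apply_apply]
    abel
  rw [this]
  exact (A.symm : F →L[𝕜] E).le_opNorm _

theorem ContinuousLinearEquiv.eventually_nhds_exists_norm_symm_lt [CompleteSpace E]
    (B : E ≃L[𝕜] F) {M : ℝ} (hM : ‖(B.symm : F →L[𝕜] E)‖ < M) :
    ∀ᶠ A in 𝓝 (B : E →L[𝕜] F), ∃ e : E ≃L[𝕜] F, (e : E →L[𝕜] F) = A ∧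
      ‖(e.symm : F →L[𝕜] E)‖ < M := by
  have hinv : ContinuousAt (fun A => ‖ContinuousLinearMap.inverse A‖) (B : E →L[𝕜] F) :=
    (contDiffAt_map_inverse (n := 0) B).continuousAt.norm
  have hlt : ∀ᶠ A in 𝓝 (B : E →L[𝕜] F), ‖ContinuousLinearMap.inverse A‖ < M :=
    hinv.eventually_lt continuousAt_const (by rwa [ContinuousLinearMap.inverse_equiv])
  filter_upwards [ContinuousLinearEquiv.nhds B, hlt] with A ⟨e, he⟩ hA
  exact ⟨e, he, by rwa [← he, ContinuousLinearMap.inverse_equiv] at hA⟩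

end

theorem forall_lt_of_le_mul_sq {e : ℕ → ℝ} {C δ : ℝ} (hC : 0 ≤ C) (hCδ : C * δ ≤ 1)
    (he : ∀ k, 0 ≤ e k) (h0 : e 0 < δ) (hstep : ∀ k, e k < δ → e (k + 1) ≤ C * e k ^ 2) :
    ∀ k, e k < δ
  | 0 => h0
  | k + 1 => by
    have ih := forall_lt_of_le_mul_sq hC hCδ he h0 hstep k
    calc e (k + 1) ≤ C * e k * e k := by simpa only [sq, mul_assoc] using hstep k ih
      _ ≤ C * δ * e k := by gcongr; exact he k
      _ ≤ e k := mul_le_of_le_one_left (he k) hCδ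
      _ < δ := ih

section

variable {E F : Type*} [NormedAddCommGroup E] [NormedSpace ℝ E]
  [NormedAddCommGroup F] [NormedSpace ℝ F]

theorem Convex.norm_image_sub_sub_le_of_lipschitzOnWith {s : Set E} (hs : Convex ℝ s)
    {f : E → F} {f' : E → E →L[ℝ] F} (hf : ∀ x ∈ s, HasFDerivWithinAt f (f' x) s x)
    {K : ℝ≥0} (hf' : LipschitzOnWith K f' s) {x y : E} (hx : x ∈ s) (hy : y ∈ s) :
    ‖f y - f x - f' x (y - x)‖ ≤ K * ‖y - x‖ ^ 2 := by
  have hseg : segment ℝ x y ⊆ s := hs.segment_subset hx hy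
  have bound : ∀ z ∈ segment ℝ x y, ‖f' z - f' x‖ ≤ K * ‖y - x‖ := fun z hz =>
    calc ‖f' z - f' x‖ ≤ K * ‖z - x‖ := by
          simpa only [dist_eq_norm] using hf'.dist_le_mul z (hseg hz) x hx
      _ ≤ K * ‖y - x‖ := by gcongr; exact norm_sub_le_of_mem_segment hz
  calc ‖f y - f x - f' x (y - x)‖ ≤ K * ‖y - x‖ * ‖y - x‖ :=
        (convex_segment x y).norm_image_sub_le_of_norm_hasFDerivWithin_le'
          (fun z hz => (hf z (hseg hz)).mono hseg) bound
          (left_mem_segment ℝ x y) (right_mem_segment ℝ x y)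
    _ = K * ‖y - x‖ ^ 2 := by ring

theorem ContDiffAt.exists_norm_newton_step_sub_le [CompleteSpace E] {f : E → F} {u : E}
    (hf : ContDiffAt ℝ 2 f u) (hu : f u = 0) (B : E ≃L[ℝ] F)
    (hB : (B : E →L[ℝ] F) = fderiv ℝ f u) :
    ∃ δ > 0, ∃ C > 0, ∀ v, ‖v - u‖ < δ →
      (∃ A : E ≃L[ℝ] F, (A : E →L[ℝ] F) = fderiv ℝ f v) ∧
      ∀ A : E ≃L[ℝ] F, (A : E →L[ℝ] F) = fderiv ℝ f v →
        ‖v - A.symm (f v) - u‖ ≤ C * ‖v - u‖ ^ 2 := by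
  have hf' : ContDiffAt ℝ 1 (fderiv ℝ f) u := hf.fderiv_right (by norm_num)
  obtain ⟨K, t, ht, hK⟩ := hf'.exists_lipschitzOnWith
  set M := ‖(B.symm : F →L[ℝ] E)‖ + 1
  have hinv : ∀ᶠ v in 𝓝 u, ∃ e : E ≃L[ℝ] F, (e : E →L[ℝ] F) = fderiv ℝ f v ∧
      ‖(e.symm : F →L[ℝ] E)‖ < M :=
    hf'.continuousAt.eventually (hB ▸ B.eventually_nhds_exists_norm_symm_lt (lt_add_one _))
  have hdiff : ∀ᶠ v in 𝓝 u, DifferentiableAt ℝ f v :=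
    (hf.eventually (by simp)).mono fun v hv => hv.differentiableAt (by norm_num)
  obtain ⟨δ, hδ, hball⟩ := Metric.eventually_nhds_iff_ball.mp (hinv.and (hdiff.and ht))
  have taylor : ∀ v ∈ ball u δ, ‖f u - f v - fderiv ℝ f v (u - v)‖ ≤ K * ‖u - v‖ ^ 2 :=
    fun v hv => (convex_ball u δ).norm_image_sub_sub_le_of_lipschitzOnWith
      (fun x hx => (hball x hx).2.1.hasFDerivAt.hasFDerivWithinAt)
      (hK.mono fun x hx => (hball x hx).2.2) hv (mem_ball_self hδ)
  refine ⟨δ, hδ, M * (K + 1), by positivity, fun v hv => ?_⟩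
  rw [← mem_ball_iff_norm] at hv
  obtain ⟨e, he, heM⟩ := (hball v hv).1
  refine ⟨⟨e, he⟩, fun A hA => ?_⟩
  obtain rfl : A = e := ContinuousLinearEquiv.coe_injective (hA.trans he.symm)
  calc ‖v - A.symm (f v) - u‖ ≤ ‖(A.symm : F →L[ℝ] E)‖ * ‖f u - f v - A (u - v)‖ :=
        A.norm_sub_symm_apply_sub_le hu v
    _ ≤ M * (K * ‖v - u‖ ^ 2) := by
        rw [norm_sub_rev v u]
        gcongr
        rw [← ContinuousLinearEquiv.coe_coe, hA]
        exact taylor v hv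
    _ ≤ M * (K + 1) * ‖v - u‖ ^ 2 := by
        rw [← mul_assoc]
        gcongr
        exact le_add_of_nonneg_right zero_le_one

end

theorem newton_quadratic_convergence {N : ℕ}
    (f : (Fin N → ℝ) → (Fin N → ℝ)) (hf : ContDiff ℝ 2 f)
    (ustar : Fin N → ℝ) (hzero : f ustar = 0)
    (B : (Fin N → ℝ) ≃L[ℝ] (Fin N → ℝ))
    (hB : (B : (Fin N → ℝ) →L[ℝ] (Fin N → ℝ)) = fderiv ℝ f ustar) :
    ∃ δ > 0, ∃ C > 0,
      (∀ v : Fin N → ℝ, ‖v - ustar‖ < δ →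
        ∃ Bv : (Fin N → ℝ) ≃L[ℝ] (Fin N → ℝ),
          (Bv : (Fin N → ℝ) →L[ℝ] (Fin N → ℝ)) = fderiv ℝ f v) ∧
      ∀ u : ℕ → (Fin N → ℝ), ‖u 0 - ustar‖ < δ →
        (∀ k, ∃ Bk : (Fin N → ℝ) ≃L[ℝ] (Fin N → ℝ),
          (Bk : (Fin N → ℝ) →L[ℝ] (Fin N → ℝ)) = fderiv ℝ f (u k) ∧
          u (k + 1) = u k - Bk.symm (f (u k))) →
        ∀ k, ‖u (k + 1) - ustar‖ ≤ C * ‖u k - ustar‖ ^ 2 := by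
  obtain ⟨δ, hδ, C, hC, hnewton⟩ := hf.contDiffAt.exists_norm_newton_step_sub_le hzero B hB
  have hρδ : min δ C⁻¹ ≤ δ := min_le_left _ _
  refine ⟨min δ C⁻¹, lt_min hδ (inv_pos.mpr hC), C, hC,
    fun v hv => (hnewton v (hv.trans_le hρδ)).1, fun u hu0 hu => ?_⟩
  have hstep : ∀ k, ‖u k - ustar‖ < δ → ‖u (k + 1) - ustar‖ ≤ C * ‖u k - ustar‖ ^ 2 := by
    intro k hk
    obtain ⟨Bk, hBk, hnext⟩ := hu k
    rw [hnext]
    exact (hnewton (u k) hk).2 Bk hBk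
  have hCρ : C * min δ C⁻¹ ≤ 1 := by
    rw [mul_min_of_nonneg _ _ hC.le, mul_inv_cancel₀ hC.ne']
    exact min_le_right _ _
  have hstay : ∀ k, ‖u k - ustar‖ < min δ C⁻¹ :=
    forall_lt_of_le_mul_sq hC.le hCρ (fun _ => norm_nonneg _) hu0
      fun k hk => hstep k (hk.trans_le hρδ)
  exact fun k => hstep k ((hstay k).trans_le hρδ)
end

section
/- For the spatially homogeneous Liley subsystem, the membrane potentials remain in the physiological range: if h_e(t) solves τ_e h_e' = h_e^r - h_e + w_e(t)(h_{ee}^{eq} - h_e) + w_i(t)(h_{ie}^{eq} - h_e) with nonnegative weight functions w_e, w_i ≥ 0, and h_{ie}^{eq} ≤ h_e(0), h_e^r, and h_e(0) ≤ h_{ee}^{eq}, then h_e(t) stays in the interval [h_{ie}^{eq}, h_{ee}^{eq}] for all t ≥ 0 (invariance of the interval bounded by the reversal potentials). -/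
/-!
At either reversal potential the right-hand side of the equation points strictly into
`[h_inh, h_exc]`, because `h_inh < h_r < h_exc` and the weights are nonnegative; so `h`
cannot cross either endpoint (the fencing theorem for derivatives).
-/

section BarrierAtLevel

variable {f : ℝ → ℝ} {a c t : ℝ}

theorem le_of_deriv_neg_of_eq (hf : Differentiable ℝ f) (ha : f a ≤ c)
    (hc : ∀ s ≥ a, f s = c → deriv f s < 0) (ht : a ≤ t) : f t ≤ c :=
  image_le_of_deriv_right_lt_deriv_boundary' (B := fun _ => c) (B' := fun _ => 0)
    hf.continuous.continuousOn (fun s _ => (hf s).hasDerivAt.hasDerivWithinAt) ha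
    continuousOn_const (fun _ _ => hasDerivWithinAt_const _ _ _)
    (fun s hs => hc s hs.1) ⟨ht, le_rfl⟩

theorem le_of_deriv_pos_of_eq (hf : Differentiable ℝ f) (ha : c ≤ f a)
    (hc : ∀ s ≥ a, f s = c → 0 < deriv f s) (ht : a ≤ t) : c ≤ f t := by
  have hneg : -f t ≤ -c := by
    refine le_of_deriv_neg_of_eq (f := -f) hf.neg (neg_le_neg ha) (fun s hs hfs => ?_) ht
    rw [deriv.neg, neg_neg_iff_pos]
    exact hc s hs (neg_inj.mp hfs)
  exact neg_le_neg_iff.mp hneg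

end BarrierAtLevel

theorem membrane_potential_invariant_interval_general
    (τ h_r h_inh h_exc : ℝ) (hτ : 0 < τ)
    (h1 : h_inh < h_r) (h2 : h_r < h_exc)
    (w_e w_i : ℝ → ℝ)
    (hwe0 : ∀ t, 0 ≤ w_e t) (hwi0 : ∀ t, 0 ≤ w_i t)
    (h : ℝ → ℝ) (hd : Differentiable ℝ h)
    (hode : ∀ t, τ * deriv h t =
      h_r - h t + w_e t * (h_exc - h t) + w_i t * (h_inh - h t))
    (hinit : h_inh ≤ h 0 ∧ h 0 ≤ h_exc) :
    ∀ t ≥ 0, h_inh ≤ h t ∧ h t ≤ h_exc := by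
  intro t ht
  constructor
  · refine le_of_deriv_pos_of_eq hd hinit.1 (fun s _ hs => ?_) ht
    have hpush : 0 < τ * deriv h s := by
      rw [hode s, hs]
      nlinarith [hwe0 s]
    exact pos_of_mul_pos_right hpush hτ.le
  · refine le_of_deriv_neg_of_eq hd hinit.2 (fun s _ hs => ?_) ht
    have hpull : τ * deriv h s < 0 := by
      rw [hode s, hs]
      nlinarith [hwi0 s]
    exact neg_of_mul_neg_right hpull hτ.le

theorem membrane_potential_invariant_interval
    (τ h_r h_inh h_exc : ℝ) (hτ : 0 < τ)
    (h1 : h_inh < h_r) (h2 : h_r < h_exc)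
    (w_e w_i : ℝ → ℝ) (hwe : Continuous w_e) (hwi : Continuous w_i)
    (hwe0 : ∀ t, 0 ≤ w_e t) (hwi0 : ∀ t, 0 ≤ w_i t)
    (h : ℝ → ℝ) (hd : Differentiable ℝ h)
    (hode : ∀ t, τ * deriv h t =
      h_r - h t + w_e t * (h_exc - h t) + w_i t * (h_inh - h t))
    (hinit : h_inh ≤ h 0 ∧ h 0 ≤ h_exc) :
    ∀ t ≥ 0, h_inh ≤ h t ∧ h t ≤ h_exc :=
  membrane_potential_invariant_interval_general τ h_r h_inh h_exc hτ h1 h2 w_e w_i hwe0 hwi0 h hd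
    hode hinit
end
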